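/- Under the same hypotheses as the previous statement but for a point (x,y) ∉ S*_j (so (x,y) ∈ S*_{j'} for some j' ≠ j, meaning F(x,y;θ*_{j'}) ≤ ε, ‖∇F(x,y;θ*_{j'})‖ ≤ ε₁, and F(x,y;θ*_j) ≥ Δ), the soft-min probability satisfies p_{θ₁,…,θ_k}(x,y;θ_j) ≤ e^{-β(Δ - (ε₁ + 2M) c_ini)} / e^{-β(ε + ε₁ c_ini + (M/2) c_ini²)}. -/

import Mathlib

/-!
Convexity at `θ*_j` gives `F(θ_j) ≥ F(θ*_j) - ‖∇F(θ*_j)‖ c_ini`, and the gradient at `θ*_j` is at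
most `ε₁ + 2M` because it is `M`-Lipschitz and `‖θ*_j - θ*_{j'}‖ ≤ 2`; so `F(θ_j) ≥ Δ - (ε₁ + 2M) c_ini`.
The descent lemma at `θ*_{j'}` gives `F(θ_{j'}) ≤ ε + ε₁ c_ini + (M/2) c_ini²`. The soft-min
numerator is then bounded above by the first estimate and its denominator below by its `j'` term.
-/

open scoped RealInnerProductSpace

section Gradient

variable {E : Type*} [NormedAddCommGroup E] [InnerProductSpace ℝ E] [CompleteSpace E]
  {f : E → ℝ} {g : E → E} {f' x y : E} {M : ℝ}

open AffineMap

theorem HasGradientAt.hasDerivAt_comp_lineMap {t : ℝ} (hf : HasGradientAt f f' (lineMap x y t)) :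
    HasDerivAt (f ∘ lineMap x y) ⟪f', y - x⟫ t := by
  simpa using hf.hasFDerivAt.comp_hasDerivAt t hasDerivAt_lineMap

theorem ConvexOn.add_inner_le_of_hasGradientAt {s : Set E} (hf : ConvexOn ℝ s f)
    (hx : x ∈ s) (hy : y ∈ s) (hgrad : HasGradientAt f f' x) :
    f x + ⟪f', y - x⟫ ≤ f y := by
  have hline : ConvexOn ℝ (lineMap x y ⁻¹' s) (f ∘ lineMap (k := ℝ) x y) := hf.comp_affineMap _
  have hderiv : HasDerivAt (f ∘ lineMap x y) ⟪f', y - x⟫ (0 : ℝ) :=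
    HasGradientAt.hasDerivAt_comp_lineMap (y := y) (by rwa [lineMap_apply_zero])
  have := hline.le_slope_of_hasDerivAt (by simpa using hx) (by simpa using hy) zero_lt_one hderiv
  simp only [slope_def_field, Function.comp_apply, lineMap_apply_zero, lineMap_apply_one] at this
  linarith

theorem ConvexOn.sub_norm_mul_le_of_hasGradientAt {s : Set E} (hf : ConvexOn ℝ s f)
    (hx : x ∈ s) (hy : y ∈ s) (hgrad : HasGradientAt f f' x) :
    f x - ‖f'‖ * ‖y - x‖ ≤ f y := by
  have := hf.add_inner_le_of_hasGradientAt hx hy hgrad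
  linarith [neg_le_of_abs_le (abs_real_inner_le_norm f' (y - x))]

theorem le_add_inner_add_of_lipschitz_gradient (hgrad : ∀ z, HasGradientAt f (g z) z)
    (hLip : ∀ u v, ‖g u - g v‖ ≤ M * ‖u - v‖) (x y : E) :
    f y ≤ f x + ⟪g x, y - x⟫ + M / 2 * ‖y - x‖ ^ 2 := by
  set φ : ℝ → ℝ := fun t => f (lineMap x y t) - t * ⟪g x, y - x⟫ - M / 2 * t ^ 2 * ‖y - x‖ ^ 2
  have hderiv (t : ℝ) : HasDerivAt φ
      (⟪g (lineMap x y t) - g x, y - x⟫ - M * t * ‖y - x‖ ^ 2) t := by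
    have := (((hgrad (lineMap x y t)).hasDerivAt_comp_lineMap).sub
      ((hasDerivAt_id t).mul_const ⟪g x, y - x⟫)).sub
      (((hasDerivAt_pow 2 t).const_mul (M / 2)).mul_const (‖y - x‖ ^ 2))
    refine this.congr_deriv ?_
    rw [inner_sub_left]
    push_cast
    ring
  have hslope {t : ℝ} (ht : 0 < t) : ⟪g (lineMap x y t) - g x, y - x⟫ ≤ M * t * ‖y - x‖ ^ 2 :=
    calc ⟪g (lineMap x y t) - g x, y - x⟫
        ≤ ‖g (lineMap x y t) - g x‖ * ‖y - x‖ := real_inner_le_norm _ _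
      _ ≤ M * ‖lineMap x y t - x‖ * ‖y - x‖ := by gcongr; exact hLip _ _
      _ = M * t * ‖y - x‖ ^ 2 := by
        rw [← vsub_eq_sub, lineMap_vsub_left, vsub_eq_sub, norm_smul, Real.norm_of_nonneg ht.le]
        ring
  have hanti : AntitoneOn φ (Set.Icc 0 1) := by
    refine antitoneOn_of_hasDerivWithinAt_nonpos (convex_Icc 0 1)
      (fun t _ => (hderiv t).continuousAt.continuousWithinAt)
      (fun t _ => (hderiv t).hasDerivWithinAt) fun t ht => ?_
    rw [interior_Icc] at ht
    linarith [hslope ht.1]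
  have := hanti (by simp) (by simp) zero_le_one
  simp only [φ, lineMap_apply_zero, lineMap_apply_one] at this
  linarith

theorem le_add_norm_mul_add_of_lipschitz_gradient (hgrad : ∀ z, HasGradientAt f (g z) z)
    (hLip : ∀ u v, ‖g u - g v‖ ≤ M * ‖u - v‖) (x y : E) :
    f y ≤ f x + ‖g x‖ * ‖y - x‖ + M / 2 * ‖y - x‖ ^ 2 := by
  linarith [le_add_inner_add_of_lipschitz_gradient hgrad hLip x y,
    real_inner_le_norm (g x) (y - x)]

end Gradient

theorem Real.exp_neg_mul_div_sum_le {ι : Type*} [Fintype ι] (a : ι → ℝ) {β A B : ℝ} (hβ : 0 ≤ β)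
    {i j : ι} (hi : A ≤ a i) (hj : a j ≤ B) :
    Real.exp (-β * a i) / ∑ l, Real.exp (-β * a l) ≤ Real.exp (-β * A) / Real.exp (-β * B) := by
  have hnum : Real.exp (-β * a i) ≤ Real.exp (-β * A) :=
    Real.exp_le_exp.2 (mul_le_mul_of_nonpos_left hi (neg_nonpos.2 hβ))
  have hden : Real.exp (-β * B) ≤ ∑ l, Real.exp (-β * a l) :=
    calc Real.exp (-β * B) ≤ Real.exp (-β * a j) :=
          Real.exp_le_exp.2 (mul_le_mul_of_nonpos_left hj (neg_nonpos.2 hβ))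
      _ ≤ ∑ l, Real.exp (-β * a l) :=
        Finset.single_le_sum (fun l _ => (Real.exp_pos (-β * a l)).le) (Finset.mem_univ j)
  exact div_le_div₀ (Real.exp_pos _).le hnum (Real.exp_pos _) hden

theorem stmt_5_general {d : ℕ} (k : ℕ)
    (Φ : EuclideanSpace ℝ (Fin d) → ℝ)
    (g : EuclideanSpace ℝ (Fin d) → EuclideanSpace ℝ (Fin d))
    (M ε ε₁ Δ cini β : ℝ) (hM : 0 ≤ M) (hβ : 0 ≤ β)
    (hconv : ConvexOn ℝ Set.univ Φ)
    (hgrad : ∀ x, HasGradientAt Φ (g x) x)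
    (hLip : ∀ u v, ‖g u - g v‖ ≤ M * ‖u - v‖)
    (θ θs : Fin k → EuclideanSpace ℝ (Fin d)) (j j' : Fin k)
    (hFj' : Φ (θs j') ≤ ε) (hgj' : ‖g (θs j')‖ ≤ ε₁)
    (hsepj : Δ ≤ Φ (θs j))
    (hini : ∀ l, ‖θ l - θs l‖ ≤ cini)
    (hdiam : ∀ l, ‖θs l - θs j'‖ ≤ 2) :
    Real.exp (-β * Φ (θ j)) / ∑ l, Real.exp (-β * Φ (θ l)) ≤
      Real.exp (-β * (Δ - (ε₁ + 2 * M) * cini)) /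
        Real.exp (-β * (ε + ε₁ * cini + (M / 2) * cini ^ 2)) := by
  have hε₁ : 0 ≤ ε₁ := (norm_nonneg _).trans hgj'
  have hgj : ‖g (θs j)‖ ≤ ε₁ + 2 * M :=
    calc ‖g (θs j)‖ ≤ ‖g (θs j')‖ + ‖g (θs j) - g (θs j')‖ := norm_le_norm_add_norm_sub' _ _
      _ ≤ ε₁ + M * 2 := by gcongr; exact (hLip _ _).trans (by gcongr; exact hdiam j)
      _ = ε₁ + 2 * M := by ring
  have hlower : Δ - (ε₁ + 2 * M) * cini ≤ Φ (θ j) :=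
    calc Δ - (ε₁ + 2 * M) * cini ≤ Φ (θs j) - ‖g (θs j)‖ * ‖θ j - θs j‖ := by
          gcongr
          exact hini j
      _ ≤ Φ (θ j) := hconv.sub_norm_mul_le_of_hasGradientAt trivial trivial (hgrad _)
  have hupper : Φ (θ j') ≤ ε + ε₁ * cini + M / 2 * cini ^ 2 :=
    calc Φ (θ j') ≤ Φ (θs j') + ‖g (θs j')‖ * ‖θ j' - θs j'‖ + M / 2 * ‖θ j' - θs j'‖ ^ 2 :=
          le_add_norm_mul_add_of_lipschitz_gradient hgrad hLip _ _
      _ ≤ ε + ε₁ * cini + M / 2 * cini ^ 2 := by gcongr <;> exact hini j'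
  exact Real.exp_neg_mul_div_sum_le (Φ ∘ θ) hβ hlower hupper

/-- soft-min probability upper bound for a point outside S*_j. -/
theorem stmt_5 {d : ℕ} (k : ℕ)
    (Φ : EuclideanSpace ℝ (Fin d) → ℝ)
    (g : EuclideanSpace ℝ (Fin d) → EuclideanSpace ℝ (Fin d))
    (M ε ε₁ Δ cini β : ℝ) (hM : 0 ≤ M) (hε₁ : 0 ≤ ε₁) (hβ : 0 ≤ β) (hΔ : 0 < Δ)
    (hconv : ConvexOn ℝ Set.univ Φ)
    (hgrad : ∀ x, HasGradientAt Φ (g x) x)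
    (hLip : ∀ u v, ‖g u - g v‖ ≤ M * ‖u - v‖)
    (θ θs : Fin k → EuclideanSpace ℝ (Fin d)) (j j' : Fin k) (hjj' : j' ≠ j)
    (hFj' : Φ (θs j') ≤ ε) (hgj' : ‖g (θs j')‖ ≤ ε₁)
    (hsepj : Δ ≤ Φ (θs j))
    (hini : ∀ l, ‖θ l - θs l‖ ≤ cini)
    (hdiam : ∀ l, ‖θs l - θs j'‖ ≤ 2) :
    Real.exp (-β * Φ (θ j)) / ∑ l, Real.exp (-β * Φ (θ l)) ≤
      Real.exp (-β * (Δ - (ε₁ + 2 * M) * cini)) /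
        Real.exp (-β * (ε + ε₁ * cini + (M / 2) * cini ^ 2)) :=
  stmt_5_general k Φ g M ε ε₁ Δ cini β hM hβ hconv hgrad hLip θ θs j j' hFj' hgj' hsepj hini hdiam
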